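/- arXiv:1103.0041 — 3 statements merged into one kernel-verified Lean document; each statement's English description precedes it below -/
import Mathlib

section
/- Let m ≥ 1 and k ≥ 1 be integers, let x : Fin m → ℝ satisfy 0 ≤ x j for all j and ∑ j, x j ≤ k, and let v be the coverage function determined by a finite type Y and A : Fin m → Finset Y. Then the expected value of v under the k-draw lottery has the closed form G_k^v(x) = ∑_{ℓ ∈ Y} (1 − (1 − (∑_{j : ℓ ∈ A j} x j)/k)^k). -/
/-!
Linearity over the elements of `Y`: the coverage `v (lotProj f)` counts the elements `ℓ` reached
by some draw, so `G_k^v(x)` is the sum over `ℓ` of the probability that some draw lands in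
`T ℓ = {j | ℓ ∈ A j}`. Since the draws are independent with law `lotW k x`, the complementary event
(every draw misses `T ℓ`) has probability `(1 - (∑ j ∈ T ℓ, x j) / k) ^ k`.
-/

open Finset

/-- Per-draw weights: project `j` is drawn with probability `x j / k`, and
`none` (no project) with the remaining probability `1 - (∑ j, x j)/k`. -/
noncomputable def lotW {m : ℕ} (k : ℕ) (x : Fin m → ℝ) : Option (Fin m) → ℝ
  | some j => x j / k
  | none => 1 - (∑ j, x j) / k

/-- Probability of a particular draw function `f : Fin t → Option (Fin m)`,
with per-draw weights determined by `k` and `x`. -/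
noncomputable def lotP {m : ℕ} (k t : ℕ) (x : Fin m → ℝ)
    (f : Fin t → Option (Fin m)) : ℝ :=
  ∏ s, lotW k x (f s)

/-- The set of projects chosen by a draw function `f`. -/
def lotProj {m t : ℕ} (f : Fin t → Option (Fin m)) : Finset (Fin m) :=
  Finset.univ.filter (fun j => ∃ s, f s = some j)


/-- Expected value of the set function `v` under the `k`-bounded-lottery
rounding scheme `r_k` applied to `x`. -/
noncomputable def lotG {m : ℕ} (k : ℕ) (v : Finset (Fin m) → ℝ)
    (x : Fin m → ℝ) : ℝ :=
  ∑ f : Fin k → Option (Fin m), lotP k k x f * v (lotProj f)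

section Lottery

variable {m : ℕ} (k : ℕ) (x : Fin m → ℝ)

lemma sum_lotW : ∑ o, lotW k x o = 1 := by
  simp only [Fintype.sum_option, lotW, ← Finset.sum_div]
  ring

lemma sum_lotP (t : ℕ) : ∑ f : Fin t → Option (Fin m), lotP k t x f = 1 := by
  simp only [lotP, ← Fintype.sum_pow, sum_lotW, one_pow]

lemma sum_lotW_mul_not_mem (T : Finset (Fin m)) :
    ∑ o, lotW k x o * (if ∀ j ∈ T, o ≠ some j then 1 else 0) = 1 - (∑ j ∈ T, x j) / k := by
  have hcompl : ({j | ∀ i ∈ T, some j ≠ some i} : Finset (Fin m)) = Tᶜ := by ext; simp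
  rw [Fintype.sum_option]
  simp only [lotW, mul_ite, mul_one, mul_zero, ← Finset.sum_filter, hcompl]
  simp only [ne_eq, reduceCtorEq, not_false_eq_true, implies_true, ite_true]
  rw [← Finset.sum_add_sum_compl T x, ← Finset.sum_div]
  ring

lemma disjoint_lotProj_iff {t : ℕ} (f : Fin t → Option (Fin m)) (T : Finset (Fin m)) :
    Disjoint (lotProj f) T ↔ ∀ s, ∀ j ∈ T, f s ≠ some j := by
  simp only [lotProj, Finset.disjoint_left, Finset.mem_filter, Finset.mem_univ, true_and]
  grind

lemma sum_lotP_mul_disjoint (t : ℕ) (T : Finset (Fin m)) :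
    ∑ f : Fin t → Option (Fin m), lotP k t x f * (if Disjoint (lotProj f) T then 1 else 0)
      = (1 - (∑ j ∈ T, x j) / k) ^ t := by
  rw [← sum_lotW_mul_not_mem, Fintype.sum_pow]
  refine Finset.sum_congr rfl fun f _ => ?_
  simp only [Finset.prod_mul_distrib, Finset.prod_boole, lotP, disjoint_lotProj_iff,
    Finset.mem_univ, true_implies]

end Lottery

lemma card_biUnion_eq_sum_not_disjoint {ι Y : Type*} [Fintype ι] [DecidableEq ι] [Fintype Y]
    [DecidableEq Y] (S : Finset ι) (A : ι → Finset Y) :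
    ((S.biUnion A).card : ℝ)
      = ∑ ℓ : Y, (1 - if Disjoint S ({j | ℓ ∈ A j} : Finset ι) then 1 else 0) := by
  have hmem : ∀ ℓ, ℓ ∈ S.biUnion A ↔ ¬Disjoint S ({j | ℓ ∈ A j} : Finset ι) := by
    simp [Finset.disjoint_left]
  calc ((S.biUnion A).card : ℝ) = ∑ ℓ : Y, if ℓ ∈ S.biUnion A then 1 else 0 := by
        rw [Finset.sum_boole, Finset.filter_mem_eq_inter, Finset.univ_inter]
    _ = _ := Finset.sum_congr rfl fun ℓ _ => by by_cases h : ℓ ∈ S.biUnion A <;> simp_all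

theorem stmt5_general (m k : ℕ) (x : Fin m → ℝ)
    (Y : Type) [Fintype Y] [DecidableEq Y] (A : Fin m → Finset Y)
    (v : Finset (Fin m) → ℝ)
    (hv : ∀ S : Finset (Fin m), v S = ((S.biUnion A).card : ℝ)) :
    lotG k v x
      = ∑ ℓ : Y,
          (1 - (1 - (∑ j ∈ Finset.univ.filter (fun j => ℓ ∈ A j), x j) / k) ^ k) := by
  simp only [lotG, hv, card_biUnion_eq_sum_not_disjoint, Finset.mul_sum, mul_sub, mul_one]
  rw [Finset.sum_comm]
  refine Finset.sum_congr rfl fun ℓ _ => ?_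
  rw [Finset.sum_sub_distrib, sum_lotP, sum_lotP_mul_disjoint]

theorem stmt5 (m k : ℕ) (hm : 1 ≤ m) (hk : 1 ≤ k) (x : Fin m → ℝ)
    (hx : ∀ j, 0 ≤ x j) (hsum : ∑ j, x j ≤ (k : ℝ))
    (Y : Type) [Fintype Y] [DecidableEq Y] (A : Fin m → Finset Y)
    (v : Finset (Fin m) → ℝ)
    (hv : ∀ S : Finset (Fin m), v S = ((S.biUnion A).card : ℝ)) :
    lotG k v x
      = ∑ ℓ : Y,
          (1 - (1 - (∑ j ∈ Finset.univ.filter (fun j => ℓ ∈ A j), x j) / k) ^ k) :=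
  stmt5_general m k x Y A v hv
end

section
/- Let v : Finset (Fin m) → ℝ be a matroid rank sum (MRS) function. Then for every S : Finset (Fin m), the discrete Hessian matrix H^v_S is negative semi-definite: for every y : Fin m → ℝ, ∑_{i : Fin m} ∑_{j : Fin m} y i · y j · H^v_S(i,j) ≤ 0. -/
/-!
A nonnegative combination of negative semidefinite forms is negative semidefinite, so it
suffices to treat the rank function `r` of a single matroid `M`. Rows and columns indexed by
`i ∈ cl S` vanish, since then `r (S + i + j) = r (S + j)`. For `i, j ∉ cl S` we have
`r (S + i) = r (S + j) = r S + 1`, and `r (S + i + j)` is `r S + 1` or `r S + 2` according to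
whether `j ∈ cl (S + i)`, i.e. whether `cl (S + i) = cl (S + j)`. So `H_S = -BBᵀ`, where `B` is
the incidence matrix of the partition of the complement of `cl S` into parallel classes of
`M / S`, and `yᵀ H_S y = -∑_C (∑_{i ∈ C} y i)²`.
-/

open Finset

open Classical in
/-- The rank of the finite set `S` in the matroid `M`: the maximum cardinality
of an independent subset of `S`. -/
noncomputable def matFinRank {m : ℕ} (M : Matroid (Fin m)) (S : Finset (Fin m)) : ℕ :=
  (S.powerset.filter
    (fun I : Finset (Fin m) => M.Indep (↑I : Set (Fin m)))).sup Finset.card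

/-- `v` is a matroid rank sum (MRS) function: a nonnegative weighted sum of
rank functions of matroids on `Fin m` with full ground set. -/
def IsMRS {m : ℕ} (v : Finset (Fin m) → ℝ) : Prop :=
  ∃ (κ : ℕ) (M : Fin κ → Matroid (Fin m)) (w : Fin κ → ℝ),
    (∀ ℓ, (M ℓ).E = Set.univ) ∧ (∀ ℓ, 0 ≤ w ℓ) ∧
    ∀ S : Finset (Fin m), v S = ∑ ℓ, w ℓ * (matFinRank (M ℓ) S : ℝ)

/-- The discrete Hessian matrix of the set function `v` at the set `S`. -/
def dHess {m : ℕ} (v : Finset (Fin m) → ℝ) (S : Finset (Fin m)) (i j : Fin m) : ℝ :=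
  v (S ∪ {i, j}) - v (S ∪ {i}) - v (S ∪ {j}) + v S

lemma sum_sum_ite_eq_mul_nonneg {ι β : Type*} [Fintype ι] [DecidableEq β] (g : ι → β)
    (y : ι → ℝ) : 0 ≤ ∑ i, ∑ j, if g i = g j then y i * y j else 0 := by
  have h : ∑ i, ∑ j, (if g i = g j then y i * y j else 0) =
      ∑ b ∈ univ.image g, (∑ i with g i = b, y i) ^ 2 := by
    rw [← sum_fiberwise_of_maps_to fun i _ => mem_image_of_mem g (mem_univ i)]
    refine sum_congr rfl fun b _ => ?_
    rw [sq, sum_mul_sum]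
    refine sum_congr rfl fun i hi => ?_
    rw [sum_filter, ← (mem_filter.1 hi).2]
    exact sum_congr rfl fun j _ => if_congr eq_comm rfl rfl
  exact h ▸ sum_nonneg fun b _ => sq_nonneg _

lemma sum_sum_mul_dHess_sum_mul {m : ℕ} {ι : Type*} [Fintype ι] (w : ι → ℝ)
    (u : ι → Finset (Fin m) → ℝ) (S : Finset (Fin m)) (y : Fin m → ℝ) :
    ∑ i, ∑ j, y i * y j * dHess (fun T => ∑ ℓ, w ℓ * u ℓ T) S i j =
      ∑ ℓ, w ℓ * ∑ i, ∑ j, y i * y j * dHess (u ℓ) S i j := by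
  have h : ∀ i j,
      dHess (fun T => ∑ ℓ, w ℓ * u ℓ T) S i j = ∑ ℓ, w ℓ * dHess (u ℓ) S i j := by
    intro i j
    simp only [dHess, mul_add, mul_sub, sum_add_distrib, sum_sub_distrib]
  simp only [h, mul_sum]
  conv_rhs => rw [sum_comm]
  refine sum_congr rfl fun i _ => ?_
  conv_rhs => rw [sum_comm]
  exact sum_congr rfl fun j _ => sum_congr rfl fun ℓ _ => by ring

lemma dHess_comm {m : ℕ} (v : Finset (Fin m) → ℝ) (S : Finset (Fin m)) (i j : Fin m) :
    dHess v S i j = dHess v S j i := by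
  rw [dHess, dHess, pair_comm]
  ring

namespace Matroid

variable {α : Type*} {M : Matroid α} {X : Set α} {e f : α}

lemma eRk_insert_of_mem_closure (he : e ∈ M.closure X) : M.eRk (insert e X) = M.eRk X := by
  rw [← eRk_insert_closure_eq, Set.insert_eq_of_mem he, eRk_closure_eq]

lemma mem_closure_insert_iff_closure_insert_eq (hf : f ∈ M.E) (hfX : f ∉ M.closure X) :
    f ∈ M.closure (insert e X) ↔ M.closure (insert e X) = M.closure (insert f X) :=
  ⟨fun h => (closure_insert_congr ⟨h, hfX⟩).symm,
    fun h => h ▸ M.mem_closure_of_mem' (Set.mem_insert f X)⟩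

end Matroid

section MatroidRankSum

variable {m : ℕ} {M : Matroid (Fin m)} {S : Finset (Fin m)} {i j : Fin m}

lemma matFinRank_eq_eRk (M : Matroid (Fin m)) (S : Finset (Fin m)) :
    (matFinRank M S : ℕ∞) = M.eRk ↑S := by
  classical
  apply le_antisymm
  · obtain ⟨J, hJ, hJsup⟩ :=
      exists_mem_eq_sup (S.powerset.filter fun I : Finset (Fin m) => M.Indep ↑I)
        ⟨∅, mem_filter.2 ⟨empty_mem_powerset S, by simp⟩⟩ card
    rw [mem_filter, mem_powerset] at hJ
    rw [matFinRank, hJsup, Matroid.le_eRk_iff]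
    exact ⟨J, by exact_mod_cast hJ.1, hJ.2, Set.encard_coe_eq_coe_finsetCard J⟩
  · refine Matroid.eRk_le_iff.2 fun I hIS hI => ?_
    obtain ⟨J, rfl⟩ := (S.finite_toSet.subset hIS).exists_finset_coe
    rw [Set.encard_coe_eq_coe_finsetCard, Nat.cast_le]
    exact le_sup (mem_filter.2 ⟨mem_powerset.2 (by exact_mod_cast hIS), hI⟩)

lemma matFinRank_insert_of_mem_closure (h : i ∈ M.closure ↑S) :
    matFinRank M (insert i S) = matFinRank M S := by
  have h' := M.eRk_insert_of_mem_closure h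
  rw [← coe_insert, ← matFinRank_eq_eRk, ← matFinRank_eq_eRk] at h'
  exact_mod_cast h'

lemma matFinRank_insert_of_mem_sdiff_closure (h : i ∈ M.E \ M.closure ↑S) :
    matFinRank M (insert i S) = matFinRank M S + 1 := by
  have h' := M.eRk_insert_eq_add_one h
  rw [← coe_insert, ← matFinRank_eq_eRk, ← matFinRank_eq_eRk] at h'
  exact_mod_cast h'

lemma dHess_matFinRank_of_mem_closure (hi : i ∈ M.closure ↑S) (j : Fin m) :
    dHess (fun T => (matFinRank M T : ℝ)) S i j = 0 := by
  have hij : i ∈ M.closure ↑(insert j S) :=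
    M.closure_subset_closure (coe_subset.2 (subset_insert j S)) hi
  simp only [dHess, union_insert, union_singleton, matFinRank_insert_of_mem_closure hi,
    matFinRank_insert_of_mem_closure hij]
  ring

open Classical in
lemma dHess_matFinRank_of_mem_sdiff_closure (hi : i ∈ M.E \ M.closure ↑S)
    (hj : j ∈ M.E \ M.closure ↑S) :
    dHess (fun T => (matFinRank M T : ℝ)) S i j =
      if j ∈ M.closure ↑(insert i S) then -1 else 0 := by
  have hSi := matFinRank_insert_of_mem_sdiff_closure hi
  have hSj := matFinRank_insert_of_mem_sdiff_closure hj
  simp only [dHess, pair_comm i j, union_insert, union_singleton]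
  split_ifs with hij
  · rw [matFinRank_insert_of_mem_closure hij, hSi, hSj]
    push_cast
    ring
  · rw [matFinRank_insert_of_mem_sdiff_closure ⟨hj.1, hij⟩, hSi, hSj]
    push_cast
    ring

lemma sum_sum_mul_dHess_matFinRank_nonpos (hE : M.E = Set.univ) (S : Finset (Fin m))
    (y : Fin m → ℝ) :
    ∑ i, ∑ j, y i * y j * dHess (fun T => (matFinRank M T : ℝ)) S i j ≤ 0 := by
  classical
  set g : Fin m → Set (Fin m) := fun k => M.closure ↑(insert k S)
  set z : Fin m → ℝ := fun k => if k ∈ M.closure ↑S then 0 else y k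
  have entry : ∀ i j, y i * y j * dHess (fun T => (matFinRank M T : ℝ)) S i j =
      -(if g i = g j then z i * z j else 0) := by
    intro i j
    by_cases hi : i ∈ M.closure ↑S
    · simp [z, hi, dHess_matFinRank_of_mem_closure hi]
    by_cases hj : j ∈ M.closure ↑S
    · simp [z, hj, dHess_comm _ S i j, dHess_matFinRank_of_mem_closure hj]
    have hE' : ∀ k, k ∈ M.E := fun k => hE ▸ Set.mem_univ k
    rw [dHess_matFinRank_of_mem_sdiff_closure ⟨hE' i, hi⟩ ⟨hE' j, hj⟩]
    simp only [g, z, hi, hj, if_false, coe_insert,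
      M.mem_closure_insert_iff_closure_insert_eq (hE' j) hj]
    split_ifs <;> ring
  simp only [entry, sum_neg_distrib, neg_nonpos]
  exact sum_sum_ite_eq_mul_nonneg g z

end MatroidRankSum

theorem stmt8 (m : ℕ) (v : Finset (Fin m) → ℝ) (hv : IsMRS v)
    (S : Finset (Fin m)) (y : Fin m → ℝ) :
    ∑ i : Fin m, ∑ j : Fin m, y i * y j * dHess v S i j ≤ 0 := by
  obtain ⟨κ, M, w, hE, hw, hv⟩ := hv
  obtain rfl : v = fun T => ∑ ℓ, w ℓ * (matFinRank (M ℓ) T : ℝ) := funext hv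
  rw [sum_sum_mul_dHess_sum_mul]
  exact sum_nonpos fun ℓ _ =>
    mul_nonpos_of_nonneg_of_nonpos (hw ℓ) (sum_sum_mul_dHess_matFinRank_nonpos (hE ℓ) S y)
end

section
/- Let m ≥ 1 and k ≥ 2 be integers, let v : Finset (Fin m) → ℝ be any set function, and regard G_k^v as a polynomial function of x : Fin m → ℝ. Then for every x : Fin m → ℝ and all i, j : Fin m, the second-order partial derivative ∂²G_k^v/∂x_i∂x_j at x equals ((k−1)/k) · ∑_{S : Finset (Fin m)} Pr_{k−2}(x)(S) · H^v_S(i,j), where Pr_{k−2}(x)(S) = ∑ over f : Fin (k−2) → Option (Fin m) with proj(f) = S of ∏_{s} w_x(f s) is the (k−2)-draw lottery probability with the same per-draw weights w_x. -/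
open Finset

/-- Partial derivative of `F : (Fin m → ℝ) → ℝ` with respect to coordinate `j`,
taken via `deriv` along coordinate updates. -/
noncomputable def pd {m : ℕ} (j : Fin m) (F : (Fin m → ℝ) → ℝ)
    (x : Fin m → ℝ) : ℝ :=
  deriv (fun t => F (Function.update x j t)) (x j)

/-!
Write `E_t(u)(x) = ∑_f P_t(x)(f) u(proj f)` for the `t`-draw expectation of a set function `u`.
Splitting off the first draw gives `E_{t+1}(u) = ∑_o w_x(o) E_t(u(o ∪ ·))`. As `∂w_x(o)/∂x_j` is
`1/k` for `o = some j`, `-1/k` for `o = none` and `0` otherwise, induction on `t` gives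
`∂_j E_{t+1}(u) = (t+1)/k · E_t(Δ_j u)` with the marginal `Δ_j u(S) = u(S ∪ {j}) - u(S)`.
Since `G_k^v = E_k(v)`, two applications give `(k-1)/k · E_{k-2}(Δ_i Δ_j v)`, and
`Δ_i Δ_j v(S)` is the discrete Hessian `H^v_S(i,j)`.
-/

noncomputable def lotE {m : ℕ} (k t : ℕ) (u : Finset (Fin m) → ℝ) (x : Fin m → ℝ) : ℝ :=
  ∑ f : Fin t → Option (Fin m), lotP k t x f * u (lotProj f)

def marginal {m : ℕ} (j : Fin m) (u : Finset (Fin m) → ℝ) (S : Finset (Fin m)) : ℝ :=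
  u (insert j S) - u S

noncomputable def lotWDeriv {m : ℕ} (k : ℕ) (j : Fin m) : Option (Fin m) → ℝ
  | some l => if l = j then 1 / k else 0
  | none => -(1 / k)

section

variable {m : ℕ}

lemma hasDerivAt_lotW_update (k : ℕ) (x : Fin m → ℝ) (j : Fin m) (o : Option (Fin m)) :
    HasDerivAt (fun t => lotW k (Function.update x j t) o) (lotWDeriv k j o) (x j) := by
  match o with
  | some l =>
    by_cases hl : l = j
    · subst hl
      simpa [lotW, lotWDeriv, one_div] using (hasDerivAt_id (x l)).div_const (k : ℝ)
    · simpa [lotW, lotWDeriv, hl, Function.update_of_ne hl] using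
        hasDerivAt_const (x j) (x l / (k : ℝ))
  | none =>
    have h : (fun t => lotW k (Function.update x j t) none)
        = fun t => 1 - (t + ∑ l ∈ univ.erase j, x l) / k := by
      funext t
      simp [lotW, Finset.sum_update_of_mem (Finset.mem_univ j)]
    rw [h]
    simpa [lotWDeriv, one_div] using
      (((hasDerivAt_id (x j)).add_const (∑ l ∈ univ.erase j, x l)).div_const (k : ℝ)).const_sub 1

lemma sum_lotWDeriv_mul (k : ℕ) (j : Fin m) (c : Option (Fin m) → ℝ) :
    ∑ o, lotWDeriv k j o * c o = (c (some j) - c none) / k := by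
  simp only [Fintype.sum_option, lotWDeriv, ite_mul, zero_mul, Finset.sum_ite_eq',
    Finset.mem_univ, if_true]
  ring

lemma lotProj_cons {n : ℕ} (o : Option (Fin m)) (g : Fin n → Option (Fin m)) :
    lotProj (Fin.cons o g : Fin (n + 1) → Option (Fin m)) = o.toFinset ∪ lotProj g := by
  ext l
  cases o <;> simp [lotProj, Fin.exists_fin_succ, eq_comm]

lemma lotE_zero (k : ℕ) (u : Finset (Fin m) → ℝ) (x : Fin m → ℝ) : lotE k 0 u x = u ∅ := by
  simp [lotE, lotP, lotProj]

lemma lotE_sub (k t : ℕ) (u u' : Finset (Fin m) → ℝ) (x : Fin m → ℝ) :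
    lotE k t (fun S => u S - u' S) x = lotE k t u x - lotE k t u' x := by
  simp only [lotE, mul_sub, Finset.sum_sub_distrib]

lemma lotE_succ (k n : ℕ) (u : Finset (Fin m) → ℝ) (x : Fin m → ℝ) :
    lotE k (n + 1) u x = ∑ o, lotW k x o * lotE k n (fun S => u (o.toFinset ∪ S)) x := by
  rw [lotE, ← (Fin.consEquiv fun _ => Option (Fin m)).sum_comp, Fintype.sum_prod_type]
  refine Finset.sum_congr rfl fun o _ => ?_
  simp only [lotE, Finset.mul_sum, lotP, Fin.consEquiv, Equiv.coe_fn_mk, Fin.prod_univ_succ,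
    Fin.cons_zero, Fin.cons_succ, lotProj_cons, mul_assoc]

lemma marginal_union_left (j : Fin m) (u : Finset (Fin m) → ℝ) (T : Finset (Fin m)) :
    marginal j (fun S => u (T ∪ S)) = fun S => marginal j u (T ∪ S) := by
  funext S
  simp only [marginal, Finset.union_insert]

lemma marginal_marginal (v : Finset (Fin m) → ℝ) (i j : Fin m) (S : Finset (Fin m)) :
    marginal i (marginal j v) S = dHess v S i j := by
  have hij : insert j (insert i S) = S ∪ {i, j} := by
    ext; simp only [Finset.mem_insert, Finset.mem_union, Finset.mem_singleton]; tauto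
  simp only [marginal, dHess, hij, Finset.union_singleton]
  ring

lemma lotE_eq_sum_fiber (k t : ℕ) (u : Finset (Fin m) → ℝ) (x : Fin m → ℝ) :
    lotE k t u x = ∑ S : Finset (Fin m),
      (∑ f ∈ univ.filter (fun f : Fin t → Option (Fin m) => lotProj f = S), lotP k t x f) * u S := by
  rw [lotE, ← Finset.sum_fiberwise univ lotProj]
  refine Finset.sum_congr rfl fun S _ => ?_
  rw [Finset.sum_mul]
  exact Finset.sum_congr rfl fun f hf => by rw [(Finset.mem_filter.1 hf).2]

lemma hasDerivAt_lotE_succ_of {k n : ℕ} {u : Finset (Fin m) → ℝ} {x : Fin m → ℝ} {j : Fin m}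
    {D : Option (Fin m) → ℝ}
    (hD : ∀ o, HasDerivAt (fun t => lotE k n (fun S => u (o.toFinset ∪ S))
      (Function.update x j t)) (D o) (x j)) :
    HasDerivAt (fun t => lotE k (n + 1) u (Function.update x j t))
      (lotE k n (marginal j u) x / k + ∑ o, lotW k x o * D o) (x j) := by
  have h := HasDerivAt.fun_sum (u := univ) fun o _ =>
    (hasDerivAt_lotW_update k x j o).fun_mul (hD o)
  simp only [Function.update_eq_self] at h
  refine (h.congr_deriv ?_).congr_of_eventuallyEq
    (Filter.Eventually.of_forall fun t => lotE_succ k n u _)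
  rw [Finset.sum_add_distrib, sum_lotWDeriv_mul]
  unfold marginal
  rw [lotE_sub]
  simp only [Option.toFinset_some, Option.toFinset_none, Finset.singleton_union,
    Finset.empty_union]

theorem hasDerivAt_lotE_succ (k n : ℕ) (u : Finset (Fin m) → ℝ) (x : Fin m → ℝ) (j : Fin m) :
    HasDerivAt (fun t => lotE k (n + 1) u (Function.update x j t))
      ((n + 1) / k * lotE k n (marginal j u) x) (x j) := by
  induction n generalizing u with
  | zero =>
    have hconst : ∀ o : Option (Fin m), HasDerivAt
        (fun t => lotE k 0 (fun S => u (o.toFinset ∪ S)) (Function.update x j t)) 0 (x j) := by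
      intro o
      simp only [lotE_zero]
      exact hasDerivAt_const _ _
    convert hasDerivAt_lotE_succ_of hconst using 1
    simp only [mul_zero, Finset.sum_const_zero, add_zero]
    push_cast
    ring
  | succ n ih =>
    convert hasDerivAt_lotE_succ_of fun o => ih fun S => u (o.toFinset ∪ S) using 1
    simp only [marginal_union_left, mul_left_comm (lotW k x _), ← Finset.mul_sum,
      ← lotE_succ]
    push_cast
    ring

lemma pd_lotE_succ (k n : ℕ) (u : Finset (Fin m) → ℝ) (j : Fin m) :
    pd j (lotE k (n + 1) u) = fun x => (n + 1) / k * lotE k n (marginal j u) x :=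
  funext fun x => (hasDerivAt_lotE_succ k n u x j).deriv

end

theorem stmt11_general (m k : ℕ) (hk : 2 ≤ k) (v : Finset (Fin m) → ℝ)
    (x : Fin m → ℝ) (i j : Fin m) :
    pd i (pd j (lotG k v)) x
      = ((k : ℝ) - 1) / k *
          ∑ S : Finset (Fin m),
            (∑ f ∈ Finset.univ.filter
                (fun f : Fin (k - 2) → Option (Fin m) => lotProj f = S),
              lotP k (k - 2) x f) * dHess v S i j := by
  obtain ⟨n, rfl⟩ : ∃ n, k = n + 2 := ⟨k - 2, by omega⟩
  have hk0 : ((n + 2 : ℕ) : ℝ) ≠ 0 := by positivity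
  have hG : pd j (lotG (n + 2) v) = lotE (n + 2) (n + 1) (marginal j v) := by
    funext y
    rw [show lotG (n + 2) v = lotE (n + 2) (n + 1 + 1) v from rfl, pd_lotE_succ]
    push_cast at hk0 ⊢
    rw [show (n + 1 + 1 : ℝ) = n + 2 by ring, div_self hk0, one_mul]
  rw [hG, pd_lotE_succ, Nat.add_sub_cancel]
  simp only [lotE_eq_sum_fiber, marginal_marginal]
  push_cast
  ring

theorem stmt11 (m k : ℕ) (hm : 1 ≤ m) (hk : 2 ≤ k) (v : Finset (Fin m) → ℝ)
    (x : Fin m → ℝ) (i j : Fin m) :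
    pd i (pd j (lotG k v)) x
      = ((k : ℝ) - 1) / k *
          ∑ S : Finset (Fin m),
            (∑ f ∈ Finset.univ.filter
                (fun f : Fin (k - 2) → Option (Fin m) => lotProj f = S),
              lotP k (k - 2) x f) * dHess v S i j :=
  stmt11_general m k hk v x i j
end
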